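/- Let ⪯ be a well-founded, infinite branching tree order on ℕ. Let (μ_j)_{j∈ℕ} be a sequence of finitely supported positive measures on ℕ with pairwise disjoint supports, and let c > 0 be such that μ_j(ℕ) < c for all j ∈ ℕ. Assume there is a summable function μ : ℕ → [0,∞) such that lim_j μ_j(V_t) = μ(V_t) for every t ∈ ℕ (i.e., (μ_j) converges to μ in the weak* sense). Then for every t ∈ ℕ with μ(t) > 0 and every ε > 0, there exist an infinite set L ⊆ ℕ and, for each j ∈ L, a subset G_j of supp μ_j such that: (i) G_j ⊆ V_t for every j ∈ L; (ii) |μ_j(G_j) − μ(t)| < ε for every j ∈ L; and (iii) for all j ≠ j' in L, every element of G_j is ⪯-incomparable with every element of G_{j'}. -/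
import Mathlib


/-- A tree order on ℕ: a partial order compatible with the usual order, in which every
node has a finite, totally ordered set of predecessors. -/
structure TreeOrder where
  le : ℕ → ℕ → Prop
  le_refl : ∀ n, le n n
  le_antisymm : ∀ {m n}, le m n → le n m → m = n
  le_trans : ∀ {a b c}, le a b → le b c → le a c
  compat : ∀ {m n}, le m n → m ≤ n
  pred_finite : ∀ n, {m | le m n}.Finite
  pred_chain : ∀ n, ∀ a, le a n → ∀ b, le b n → le a b ∨ le b a

/-- The tree is well-founded: there is no infinite ⪯-chain. -/
def TreeOrder.IsWellFoundedTree (T : TreeOrder) : Prop :=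
  ¬ ∃ c : ℕ → ℕ, StrictMono c ∧ ∀ i, T.le (c i) (c (i + 1))

/-- `s` is an immediate successor of `t`. -/
def TreeOrder.ImmSucc (T : TreeOrder) (t s : ℕ) : Prop :=
  T.le t s ∧ t ≠ s ∧ ∀ u, T.le t u → T.le u s → u = t ∨ u = s

/-- The tree is infinite branching: every non-maximal node has infinitely many
immediate successors. -/
def TreeOrder.InfiniteBranching (T : TreeOrder) : Prop :=
  ∀ t, (∃ s, T.le t s ∧ t ≠ s) → {s | T.ImmSucc t s}.Infinite

/-- Two nodes are incomparable. -/
def TreeOrder.Incomp (T : TreeOrder) (s t : ℕ) : Prop :=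
  ¬ T.le s t ∧ ¬ T.le t s

/-- The measure of a set `A` under a (finitely supported, positive) density `μ : ℕ → ℝ`. -/
noncomputable def mset (μ : ℕ → ℝ) (A : Set ℕ) : ℝ :=
  ∑' t, A.indicator μ t

/-- The set of `t` together with all of its successors. -/
def TreeOrder.V (T : TreeOrder) (t : ℕ) : Set ℕ := {s | T.le t s}

open Filter Topology

-- auxiliary lemmas
section Aux
open Filter Topology Set

-- immediate successor existence
lemma TreeOrder.exists_immSucc_le (T : TreeOrder) {t u : ℕ} (htu : T.le t u) (hne : u ≠ t) :
    ∃ s, T.ImmSucc t s ∧ T.le s u := by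
  classical
  have hCfin : {m | T.le t m ∧ T.le m u ∧ m ≠ t}.Finite :=
    (T.pred_finite u).subset (fun m hm => hm.2.1)
  set C := hCfin.toFinset with hC
  have hmem : ∀ v, v ∈ C ↔ (T.le t v ∧ T.le v u ∧ v ≠ t) := by
    intro v; simp [hC]
  have hCne : C.Nonempty := ⟨u, (hmem u).2 ⟨htu, T.le_refl u, hne⟩⟩
  set s := C.min' hCne with hs
  have hsC : T.le t s ∧ T.le s u ∧ s ≠ t := (hmem s).1 (C.min'_mem hCne)
  have hleast : ∀ v, T.le t v → T.le v u → v ≠ t → T.le s v := by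
    intro v h1 h2 h3
    have hvC : v ∈ C := (hmem v).2 ⟨h1, h2, h3⟩
    rcases T.pred_chain u v h2 s hsC.2.1 with h | h
    · have h4 : s ≤ v := C.min'_le v hvC
      have h5 : v ≤ s := T.compat h
      have h6 : v = s := Nat.le_antisymm h5 h4
      rw [h6]; exact T.le_refl _
    · exact h
  refine ⟨s, ⟨hsC.1, Ne.symm hsC.2.2, ?_⟩, hsC.2.1⟩
  intro v hv hvs
  by_cases hvt : v = t
  · exact Or.inl hvt
  · exact Or.inr (T.le_antisymm hvs (hleast v hv (T.le_trans hvs hsC.2.1) hvt))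

lemma TreeOrder.immSucc_eq_of_le (T : TreeOrder) {t s s' u : ℕ}
    (h : T.ImmSucc t s) (h' : T.ImmSucc t s') (hu : T.le s u) (hu' : T.le s' u) : s = s' := by
  rcases T.pred_chain u s hu s' hu' with hss | hss
  · rcases h'.2.2 s h.1 hss with h0 | h0
    · exact absurd h0.symm h.2.1
    · exact h0
  · rcases h.2.2 s' h'.1 hss with h0 | h0
    · exact absurd h0.symm h'.2.1
    · exact h0.symm

noncomputable def TreeOrder.iss (T : TreeOrder) (t u : ℕ) : ℕ := by
  classical exact if h : ∃ s, T.ImmSucc t s ∧ T.le s u then h.choose else 0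

lemma TreeOrder.iss_spec (T : TreeOrder) {t u : ℕ} (htu : T.le t u) (hne : u ≠ t) :
    T.ImmSucc t (T.iss t u) ∧ T.le (T.iss t u) u := by
  classical
  have h := T.exists_immSucc_le htu hne
  simp only [TreeOrder.iss, dif_pos h]
  exact h.choose_spec

-- measure lemmas
lemma mset_nonneg {f : ℕ → ℝ} (hnn : ∀ x, 0 ≤ f x) (A : Set ℕ) : 0 ≤ mset f A :=
  tsum_nonneg (fun x => Set.indicator_nonneg (fun y _ => hnn y) x)

lemma mset_mono {f : ℕ → ℝ} (hf : Summable f) (hnn : ∀ x, 0 ≤ f x) {A B : Set ℕ}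
    (h : A ⊆ B) : mset f A ≤ mset f B :=
  Summable.tsum_le_tsum (fun x => Set.indicator_le_indicator_of_subset h (fun y => hnn y) x)
    (hf.indicator A) (hf.indicator B)

lemma mset_union {f : ℕ → ℝ} (hf : Summable f) {A B : Set ℕ} (h : Disjoint A B) :
    mset f (A ∪ B) = mset f A + mset f B := by
  unfold mset
  rw [← Summable.tsum_add (hf.indicator A) (hf.indicator B)]
  exact tsum_congr (fun x => by rw [Set.indicator_union_of_disjoint h])

lemma mset_singleton (f : ℕ → ℝ) (t : ℕ) : mset f {t} = f t := by
  unfold mset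
  rw [tsum_eq_single t]
  · simp
  · intro b hb; simp [Set.indicator, hb]

lemma mset_congr_support (f : ℕ → ℝ) (A : Set ℕ) :
    mset f (Function.support f ∩ A) = mset f A := by
  unfold mset
  refine tsum_congr (fun x => ?_)
  by_cases hA : x ∈ A
  · by_cases hs : f x = 0
    · simp [Set.indicator, hs]
    · simp [Set.indicator, hA, hs, Function.mem_support]
  · simp [Set.indicator, hA, fun h : x ∈ Function.support f ∩ A => hA h.2]

lemma mset_biUnion {f : ℕ → ℝ} (hf : Summable f) (A : Finset ℕ) (V : ℕ → Set ℕ)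
    (hd : ∀ s ∈ A, ∀ s' ∈ A, s ≠ s' → Disjoint (V s) (V s')) :
    mset f (⋃ s ∈ A, V s) = ∑ s ∈ A, mset f (V s) := by
  classical
  induction A using Finset.induction_on with
  | empty => simp [mset]
  | @insert a s hx ih =>
    rw [Finset.sum_insert hx]
    have hdis : Disjoint (V a) (⋃ s' ∈ s, V s') := by
      refine Set.disjoint_iUnion₂_right.2 (fun s' hs' => ?_)
      exact hd a (Finset.mem_insert_self a s) s' (Finset.mem_insert_of_mem hs')
        (fun h => hx (h ▸ hs'))
    have : (⋃ s' ∈ insert a s, V s') = V a ∪ ⋃ s' ∈ s, V s' := by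
      simp [Set.biUnion_insert]
    rw [this, mset_union hf hdis, ih (fun x hx' y hy' => hd x
      (Finset.mem_insert_of_mem hx') y (Finset.mem_insert_of_mem hy'))]

-- the remainder set
def WW (T : TreeOrder) (t : ℕ) (A : Finset ℕ) : Set ℕ :=
  {u | T.le t u ∧ u ≠ t ∧ ∀ s ∈ A, ¬ T.le s u}

lemma WW_antitone (T : TreeOrder) (t : ℕ) {A B : Finset ℕ} (h : A ⊆ B) :
    WW T t B ⊆ WW T t A := by
  intro u hu
  exact ⟨hu.1, hu.2.1, fun s hs => hu.2.2 s (h hs)⟩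

lemma mset_partition (T : TreeOrder) {f : ℕ → ℝ} (hf : Summable f) (t : ℕ)
    (A : Finset ℕ) (hA : ∀ s ∈ A, T.ImmSucc t s) :
    mset f (T.V t) = (f t + ∑ s ∈ A, mset f (T.V s)) + mset f (WW T t A) := by
  have hVsub : ∀ s ∈ A, T.V s ⊆ T.V t := fun s hs u hu => T.le_trans (hA s hs).1 hu
  have hnotV : ∀ s ∈ A, t ∉ T.V s := by
    intro s hs h
    exact (hA s hs).2.1 (T.le_antisymm (hA s hs).1 h)
  have hVV : ∀ s ∈ A, ∀ s' ∈ A, s ≠ s' → Disjoint (T.V s) (T.V s') := by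
    intro s hs s' hs' hne
    rw [Set.disjoint_left]
    intro u hu hu'
    exact hne (T.immSucc_eq_of_le (hA s hs) (hA s' hs') hu hu')
  have hset : T.V t = ({t} ∪ ⋃ s ∈ A, T.V s) ∪ WW T t A := by
    ext u
    constructor
    · intro hu
      by_cases hut : u = t
      · exact Or.inl (Or.inl hut)
      · by_cases hex : ∃ s ∈ A, T.le s u
        · rcases hex with ⟨s, hs, hsu⟩
          exact Or.inl (Or.inr (Set.mem_biUnion hs hsu))
        · push_neg at hex
          exact Or.inr ⟨hu, hut, hex⟩
    · rintro (h | h)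
      · rcases h with h | h
        · rw [Set.mem_singleton_iff] at h; rw [h]; exact T.le_refl t
        · rcases Set.mem_iUnion₂.1 h with ⟨s, hs, hsu⟩
          exact hVsub s hs hsu
      · exact h.1
  have hd1 : Disjoint ({t} ∪ ⋃ s ∈ A, T.V s) (WW T t A) := by
    rw [Set.disjoint_left]
    rintro u (h | h) hu
    · rw [Set.mem_singleton_iff] at h; exact hu.2.1 h
    · rcases Set.mem_iUnion₂.1 h with ⟨s, hs, hsu⟩
      exact hu.2.2 s hs hsu
  have hd2 : Disjoint ({t} : Set ℕ) (⋃ s ∈ A, T.V s) := by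
    rw [Set.disjoint_left]
    rintro u h hu
    rw [Set.mem_singleton_iff] at h; subst h
    rcases Set.mem_iUnion₂.1 hu with ⟨s, hs, hsu⟩
    exact hnotV s hs hsu
  rw [hset, mset_union hf hd1, mset_union hf hd2, mset_singleton, mset_biUnion hf A _ hVV]

lemma mset_tail {f : ℕ → ℝ} (hf : Summable f) (hnn : ∀ x, 0 ≤ f x) {δ : ℝ} (hδ : 0 < δ) :
    ∃ F : Finset ℕ, mset f ((F : Set ℕ)ᶜ) < δ := by
  have h := hf.hasSum
  rw [HasSum] at h
  have : ∀ᶠ F : Finset ℕ in atTop, (∑' i, f i) - δ < ∑ i ∈ F, f i :=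
    h.eventually (eventually_gt_nhds (by linarith))
  rcases this.exists with ⟨F, hF⟩
  refine ⟨F, ?_⟩
  have hkey : ∑ x ∈ F, f x + ∑' (x : ↑(↑F : Set ℕ)ᶜ), f ↑x = ∑' (x : ℕ), f x :=
    Summable.sum_add_tsum_compl hf
  have : mset f ((F : Set ℕ)ᶜ) = ∑' (x : ↑(↑F : Set ℕ)ᶜ), f ↑x := (tsum_subtype _ f).symm
  rw [this]
  linarith

end Aux


/-- if moreover `(μ j)` converges in the weak* sense to a summable positive
`μlim`, then for every `t` in the support of `μlim` and every `ε > 0` there are an infinite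
`L ⊆ ℕ` and sets `G j ⊆ supp (μ j) ∩ V t` with `|μ j (G j) − μlim t| < ε`, the `G j`
pairwise incomparable. -/
theorem statement1 (T : TreeOrder) (hwf : T.IsWellFoundedTree) (hib : T.InfiniteBranching)
    (μ : ℕ → ℕ → ℝ)
    (hnn : ∀ j t, 0 ≤ μ j t)
    (hfin : ∀ j, (Function.support (μ j)).Finite)
    (hdisj : ∀ j j', j ≠ j' → Disjoint (Function.support (μ j)) (Function.support (μ j')))
    (c : ℝ) (hc : 0 < c) (hbd : ∀ j, mset (μ j) Set.univ < c)
    (μlim : ℕ → ℝ) (hlnn : ∀ t, 0 ≤ μlim t) (hlsum : Summable μlim)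
    (hw : ∀ t : ℕ, Tendsto (fun j => mset (μ j) (T.V t)) atTop (𝓝 (mset μlim (T.V t))))
    (t : ℕ) (ht : 0 < μlim t) (ε : ℝ) (hε : 0 < ε) :
    ∃ L : Set ℕ, L.Infinite ∧ ∃ G : ℕ → Set ℕ,
      (∀ j ∈ L, G j ⊆ Function.support (μ j)) ∧
      (∀ j ∈ L, G j ⊆ T.V t) ∧
      (∀ j ∈ L, |mset (μ j) (G j) - μlim t| < ε) ∧
      (∀ j ∈ L, ∀ j' ∈ L, j ≠ j' → ∀ s ∈ G j, ∀ u ∈ G j', T.Incomp s u) := by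
  classical
  have hsum : ∀ j, Summable (μ j) := fun j => summable_of_finite_support (hfin j)
  -- initial finite set of immediate successors
  obtain ⟨F, hF⟩ := mset_tail hlsum hlnn (half_pos hε)
  set S0 : Finset ℕ := (F.filter (fun u => T.le t u ∧ u ≠ t)).image (T.iss t) with hS0
  have hS0imm : ∀ s ∈ S0, T.ImmSucc t s := by
    intro s hs
    rcases Finset.mem_image.1 hs with ⟨u, hu, rfl⟩
    rcases Finset.mem_filter.1 hu with ⟨-, h1, h2⟩
    exact (T.iss_spec h1 h2).1
  have hWS0 : mset μlim (WW T t S0) < ε / 2 := by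
    refine lt_of_le_of_lt (mset_mono hlsum hlnn ?_) hF
    intro u hu huF
    have h1 : u ∈ F.filter (fun u => T.le t u ∧ u ≠ t) :=
      Finset.mem_filter.2 ⟨huF, hu.1, hu.2.1⟩
    exact hu.2.2 _ (Finset.mem_image_of_mem (T.iss t) h1) (T.iss_spec hu.1 hu.2.1).2
  -- eventually μ j t = 0
  have hev2 : ∀ᶠ j in atTop, μ j t = 0 := by
    by_cases h : ∃ j0, μ j0 t ≠ 0
    · rcases h with ⟨j0, hj0⟩
      refine eventually_atTop.2 ⟨j0 + 1, fun j hj => ?_⟩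
      by_contra hj'
      have hne : j ≠ j0 := by omega
      exact Set.disjoint_left.1 (hdisj j j0 hne) hj' hj0
    · push_neg at h
      exact Eventually.of_forall h
  -- key step
  have key : ∀ A : Finset ℕ, (∀ s ∈ A, T.ImmSucc t s) → mset μlim (WW T t A) < ε / 2 →
      ∀ n : ℕ, ∃ j, n < j ∧ μ j t = 0 ∧ |mset (μ j) (WW T t A) - μlim t| < ε := by
    intro A hA hWA n
    set w := mset μlim (WW T t A) with hw'
    have hw0 : 0 ≤ w := mset_nonneg hlnn _
    have hid : mset μlim (T.V t) - ∑ s ∈ A, mset μlim (T.V s) = μlim t + w := by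
      have := mset_partition T hlsum t A hA; linarith
    have hidj : ∀ j, μ j t = 0 → mset (μ j) (T.V t) - ∑ s ∈ A, mset (μ j) (T.V s)
        = mset (μ j) (WW T t A) := by
      intro j hj
      have := mset_partition T (hsum j) t A hA
      rw [hj] at this; linarith
    have htend : Tendsto (fun j => mset (μ j) (T.V t) - ∑ s ∈ A, mset (μ j) (T.V s)) atTop
        (𝓝 (μlim t + w)) := by
      rw [← hid]
      exact (hw t).sub (tendsto_finset_sum A (fun s _ => hw s))
    have hev1 : ∀ᶠ j in atTop,
        |(mset (μ j) (T.V t) - ∑ s ∈ A, mset (μ j) (T.V s)) - (μlim t + w)| < ε / 2 := by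
      refine (Metric.tendsto_nhds.mp htend (ε / 2) (half_pos hε)).mono (fun j hj => ?_)
      rw [Real.dist_eq] at hj
      exact hj
    rcases ((hev1.and hev2).and (eventually_gt_atTop n)).exists with ⟨j, ⟨h1, h2⟩, h3⟩
    refine ⟨j, h3, h2, ?_⟩
    rw [← hidj j h2]
    set X := mset (μ j) (T.V t) - ∑ s ∈ A, mset (μ j) (T.V s) with hX
    have habs : |X - μlim t| ≤ |X - (μlim t + w)| + |w| := by
      have : X - μlim t = (X - (μlim t + w)) + w := by ring
      rw [this]; exact abs_add_le _ _
    rw [abs_of_nonneg hw0] at habs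
    linarith
  choose! jf hjf1 hjf2 hjf3 using key
  -- the finite set of immediate successors used by μ j
  set Fof : ℕ → Finset ℕ :=
    fun j => ((hfin j).toFinset.filter (fun u => T.le t u ∧ u ≠ t)).image (T.iss t) with hFof
  have hFofimm : ∀ j, ∀ s ∈ Fof j, T.ImmSucc t s := by
    intro j s hs
    rcases Finset.mem_image.1 hs with ⟨u, hu, rfl⟩
    rcases Finset.mem_filter.1 hu with ⟨-, h1, h2⟩
    exact (T.iss_spec h1 h2).1
  have hFofmem : ∀ j u, μ j u ≠ 0 → T.le t u → u ≠ t → T.iss t u ∈ Fof j := by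
    intro j u h0 h1 h2
    exact Finset.mem_image_of_mem _ (Finset.mem_filter.2 ⟨(hfin j).mem_toFinset.2 h0, h1, h2⟩)
  -- the orbit
  set step : ℕ × Finset ℕ → ℕ × Finset ℕ :=
    fun p => (jf p.2 p.1, p.2 ∪ Fof (jf p.2 p.1)) with hstepdef
  set o : ℕ → ℕ × Finset ℕ := fun k => step^[k] (0, S0) with ho
  have hosucc : ∀ k, o (k + 1) = step (o k) := fun k => Function.iterate_succ_apply' step k _
  have hinv : ∀ k, (∀ s ∈ (o k).2, T.ImmSucc t s) ∧ mset μlim (WW T t (o k).2) < ε / 2 := by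
    intro k; induction k with
    | zero => exact ⟨hS0imm, hWS0⟩
    | succ k ih =>
      rw [hosucc k]
      refine ⟨?_, ?_⟩
      · intro s hs
        rcases Finset.mem_union.1 hs with hs | hs
        · exact ih.1 s hs
        · exact hFofimm _ s hs
      · exact lt_of_le_of_lt
          (mset_mono hlsum hlnn (WW_antitone T t Finset.subset_union_left)) ih.2
  have hprop : ∀ k, (o k).1 < (o (k + 1)).1 ∧ μ ((o (k + 1)).1) t = 0 ∧
      |mset (μ ((o (k + 1)).1)) (WW T t (o k).2) - μlim t| < ε := by
    intro k
    rw [hosucc k]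
    exact ⟨hjf1 _ (hinv k).1 (hinv k).2 _, hjf2 _ (hinv k).1 (hinv k).2 _,
      hjf3 _ (hinv k).1 (hinv k).2 _⟩
  have hmono : Monotone (fun k => (o k).2) := by
    apply monotone_nat_of_le_succ
    intro k
    rw [hosucc k]
    exact Finset.subset_union_left
  have hFsub : ∀ k, Fof ((o (k + 1)).1) ⊆ (o (k + 1)).2 := by
    intro k
    rw [hosucc k]
    exact Finset.subset_union_right
  set q : ℕ → ℕ := fun k => (o (k + 1)).1 with hq
  have hqmono : StrictMono q := strictMono_nat_of_lt_succ (fun k => (hprop (k + 1)).1)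
  -- the sets G
  set G : ℕ → Set ℕ := fun j =>
    if h : ∃ k, q k = j then Function.support (μ j) ∩ WW T t ((o h.choose).2) else ∅
    with hG
  have hGspec : ∀ k, G (q k) = Function.support (μ (q k)) ∩ WW T t ((o k).2) := by
    intro k
    have h : ∃ k', q k' = q k := ⟨k, rfl⟩
    have hk' : h.choose = k := hqmono.injective h.choose_spec
    rw [hG]; simp only [dif_pos h, hk']
  refine ⟨Set.range q, Set.infinite_range_of_injective hqmono.injective, G, ?_, ?_, ?_, ?_⟩
  · rintro j ⟨k, rfl⟩
    rw [hGspec k]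
    exact Set.inter_subset_left
  · rintro j ⟨k, rfl⟩
    rw [hGspec k]
    exact fun u hu => hu.2.1
  · rintro j ⟨k, rfl⟩
    rw [hGspec k, mset_congr_support]
    exact (hprop k).2.2
  · have main : ∀ k k', k < k' → ∀ u ∈ G (q k), ∀ u' ∈ G (q k'), T.Incomp u u' := by
      intro k k' hkk' u hu u' hu'
      rw [hGspec k] at hu
      rw [hGspec k'] at hu'
      obtain ⟨hu0, hut, hune, huA⟩ : μ (q k) u ≠ 0 ∧ T.le t u ∧ u ≠ t ∧
          ∀ s ∈ (o k).2, ¬ T.le s u := ⟨hu.1, hu.2.1, hu.2.2.1, hu.2.2.2⟩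
      obtain ⟨hu0', hut', hune', huA'⟩ : μ (q k') u' ≠ 0 ∧ T.le t u' ∧ u' ≠ t ∧
          ∀ s ∈ (o k').2, ¬ T.le s u' := ⟨hu'.1, hu'.2.1, hu'.2.2.1, hu'.2.2.2⟩
      set s := T.iss t u with hs
      have hsspec := T.iss_spec hut hune
      have hsmem : s ∈ (o k').2 := by
        have h1 : s ∈ Fof (q k) := hFofmem _ u hu0 hut hune
        have h2 : s ∈ (o (k + 1)).2 := hFsub k h1
        exact hmono (by omega : k + 1 ≤ k') h2
      constructor
      · intro hle
        exact huA' s hsmem (T.le_trans hsspec.2 hle)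
      · intro hle
        set s' := T.iss t u' with hs'
        have hs'spec := T.iss_spec hut' hune'
        have heq : s = s' :=
          T.immSucc_eq_of_le hsspec.1 hs'spec.1 hsspec.2 (T.le_trans hs'spec.2 hle)
        exact huA' s hsmem (heq ▸ hs'spec.2)
    rintro j ⟨k, rfl⟩ j' ⟨k', rfl⟩ hne u hu u' hu'
    have hkk' : k ≠ k' := fun h => hne (by rw [h])
    rcases hkk'.lt_or_gt with h | h
    · exact main k k' h u hu u' hu'
    · have := main k' k h u' hu' u hu
      exact ⟨this.2, this.1⟩
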